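/- arXiv:1004.0978 — 2 statements merged into one kernel-verified Lean document; each statement's English description precedes it below -/
import Mathlib

section
/- Let n ≥ 2 be an integer. For every 1-periodic function f : ℝ → ℝ of class Cⁿ⁻², there exists a unique 1-periodic function u : ℝ → ℝ of class Cⁿ such that μ(u) − u'' = f; moreover, for x ∈ [0,1] this u is given explicitly by u(x) = (x²/2 − x/2 + 13/12) ∫₀¹ f(a) da + (x − 1/2) ∫₀¹∫₀ᵃ f(b) db da − ∫₀ˣ∫₀ᵃ f(b) db da + ∫₀¹∫₀ᵃ∫₀ᵇ f(c) dc db da. -/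
/-- The mean `μ(f) = ∫₀¹ f(x) dx` of a (1-periodic) function. -/
noncomputable def circMean (f : ℝ → ℝ) : ℝ := ∫ x in (0:ℝ)..1, f x

/-!
Let `F = ∫₀ˣ f` and `G = ∫₀ˣ F`. Periodicity of `f` gives `F (x + 1) = F x + μ(f)` and
`G (x + 1) = G x + G 1 + μ(f) x`; the quadratic and linear terms of the explicit formula cancel
these increments, so `u` is periodic, while `u'' = μ(f) - f` and `μ(u) = μ(f)`.
For uniqueness, the difference `d` of two solutions has constant second derivative `μ(d)`.
A periodic function with constant derivative has derivative `0`; applied to `d'` and then to `d`,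
this makes `d` constant, hence equal to its mean `μ(d) = 0`.
-/

open Function intervalIntegral

section Periodic

variable {E : Type*} [NormedAddCommGroup E] [NormedSpace ℝ E]

lemma Function.Periodic.deriv {g : ℝ → E} {p : ℝ} (hg : Periodic g p) :
    Periodic (deriv g) p := fun x => by
  rw [← deriv_comp_add_const, funext hg]

lemma Function.Periodic.eq_zero_of_hasDerivAt_const {g : ℝ → E} {p : ℝ} {c : E}
    (hg : Periodic g p) (hp : p ≠ 0) (hd : ∀ x, HasDerivAt g c x) : c = 0 := by
  have hd' : ∀ x, HasDerivAt (fun t => g t - t • c) 0 x := fun x => by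
    simpa using (hd x).fun_sub ((hasDerivAt_id x).smul_const c)
  have h := is_const_of_deriv_eq_zero (fun x => (hd' x).differentiableAt)
    (fun x => (hd' x).deriv) p 0
  simp only [hg.eq, zero_smul, sub_zero, sub_eq_self, smul_eq_zero, hp, false_or] at h
  exact h

lemma add_sub_self_eq_of_hasDerivAt {G F : ℝ → E} {p : ℝ} {c : E}
    (hG : ∀ x, HasDerivAt G (F x) x) (hF : ∀ x, F (x + p) - F x = c) (x : ℝ) :
    G (x + p) - G x = G p - G 0 + x • c := by
  have hd : ∀ t, HasDerivAt (fun t => G (t + p) - G t - t • c) 0 t := fun t => by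
    have := (((hG (t + p)).comp_add_const t p).fun_sub (hG t)).fun_sub
      ((hasDerivAt_id t).smul_const c)
    simpa [hF t] using this
  have h := is_const_of_deriv_eq_zero (fun t => (hd t).differentiableAt)
    (fun t => (hd t).deriv) x 0
  simp only [zero_add, zero_smul, sub_zero] at h
  rw [← h]; abel

end Periodic

noncomputable def primitive (f : ℝ → ℝ) (x : ℝ) : ℝ := ∫ t in (0:ℝ)..x, f t

section Primitive

variable {f : ℝ → ℝ}

lemma hasDerivAt_primitive (hf : Continuous f) (x : ℝ) : HasDerivAt (primitive f) (f x) x :=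
  (hf.integral_hasStrictDerivAt 0 x).hasDerivAt

@[simp]
lemma primitive_zero : primitive f 0 = 0 :=
  integral_same

lemma continuous_primitive (hf : Continuous f) : Continuous (primitive f) :=
  continuous_iff_continuousAt.2 fun x => (hasDerivAt_primitive hf x).continuousAt

lemma contDiff_primitive {m : ℕ} (hf : ContDiff ℝ m f) :
    ContDiff ℝ (m + 1 : ℕ) (primitive f) := by
  rw [Nat.cast_succ, contDiff_succ_iff_deriv]
  refine ⟨fun x => (hasDerivAt_primitive hf.continuous x).differentiableAt, by simp, ?_⟩
  rwa [funext fun x => (hasDerivAt_primitive hf.continuous x).deriv]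

lemma primitive_add_one (hf : Continuous f) (hper : Periodic f 1) (x : ℝ) :
    primitive f (x + 1) = primitive f x + primitive f 1 := by
  have := add_sub_self_eq_of_hasDerivAt (hasDerivAt_primitive hf)
    (fun y => by rw [hper y, sub_self]) x
  simp only [primitive_zero, sub_zero, smul_zero, add_zero] at this
  linarith

lemma primitive_primitive_add_one (hf : Continuous f) (hper : Periodic f 1) (x : ℝ) :
    primitive (primitive f) (x + 1) =
      primitive (primitive f) x + primitive (primitive f) 1 + x * primitive f 1 := by
  have := add_sub_self_eq_of_hasDerivAt (hasDerivAt_primitive (continuous_primitive hf))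
    (fun y => by rw [primitive_add_one hf hper]; ring) x
  simp only [primitive_zero, sub_zero, smul_eq_mul] at this
  linarith

end Primitive

/-- `13 / 12` makes the quadratic coefficient have mean `1`, and the last term cancels the mean of
the double primitive, so that the solution has the same mean as `f`. -/
noncomputable def periodicSolution (f : ℝ → ℝ) (x : ℝ) : ℝ :=
  (x ^ 2 / 2 - x / 2 + 13 / 12) * primitive f 1 + (x - 1 / 2) * primitive (primitive f) 1
    - primitive (primitive f) x + primitive (primitive (primitive f)) 1

section PeriodicSolution

variable {f : ℝ → ℝ}

lemma hasDerivAt_periodicSolution (hf : Continuous f) (x : ℝ) :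
    HasDerivAt (periodicSolution f)
      ((x - 1 / 2) * primitive f 1 + primitive (primitive f) 1 - primitive f x) x := by
  have hpoly := ((((hasDerivAt_pow 2 x).div_const 2).sub ((hasDerivAt_id x).div_const 2)).add_const
    (13 / 12) |>.mul_const (primitive f 1)).add
    (((hasDerivAt_id x).sub_const (1 / 2)).mul_const (primitive (primitive f) 1))
  exact ((hpoly.sub (hasDerivAt_primitive (continuous_primitive hf) x)).add_const _).congr_deriv
    (by norm_num)

lemma iteratedDeriv_two_periodicSolution (hf : Continuous f) (x : ℝ) :
    iteratedDeriv 2 (periodicSolution f) x = primitive f 1 - f x := by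
  have hd : HasDerivAt (fun x => (x - 1 / 2) * primitive f 1 + primitive (primitive f) 1
      - primitive f x) (primitive f 1 - f x) x :=
    (((((hasDerivAt_id x).sub_const (1 / 2)).mul_const (primitive f 1)).add_const _).sub
      (hasDerivAt_primitive hf x)).congr_deriv (by simp)
  rw [iteratedDeriv_succ, iteratedDeriv_one,
    funext fun x => (hasDerivAt_periodicSolution hf x).deriv, hd.deriv]

lemma periodic_periodicSolution (hf : Continuous f) (hper : Periodic f 1) :
    Periodic (periodicSolution f) 1 := fun x => by
  simp only [periodicSolution, primitive_primitive_add_one hf hper]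
  ring

lemma integral_quadratic_mul_add_linear_mul (a b : ℝ) :
    ∫ x in (0:ℝ)..1, (x ^ 2 / 2 - x / 2 + 13 / 12) * a + (x - 1 / 2) * b = a := by
  have hP : ∀ x : ℝ, HasDerivAt
      (fun x : ℝ => (x ^ 3 / 6 - x ^ 2 / 4 + 13 / 12 * x) * a + (x ^ 2 / 2 - x / 2) * b)
      ((x ^ 2 / 2 - x / 2 + 13 / 12) * a + (x - 1 / 2) * b) x := fun x =>
    ((((((hasDerivAt_pow 3 x).div_const 6).sub ((hasDerivAt_pow 2 x).div_const 4)).add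
      ((hasDerivAt_id x).const_mul (13 / 12))).mul_const a).add
      ((((hasDerivAt_pow 2 x).div_const 2).sub ((hasDerivAt_id x).div_const 2)).mul_const b))
      |>.congr_deriv (by push_cast; ring)
  rw [integral_eq_sub_of_hasDerivAt (fun x _ => hP x)
    (Continuous.intervalIntegrable (by fun_prop) _ _)]
  norm_num

lemma circMean_periodicSolution (hf : Continuous f) :
    circMean (periodicSolution f) = primitive f 1 := by
  have hG := (continuous_primitive (continuous_primitive hf)).intervalIntegrable
    (μ := MeasureTheory.volume) 0 1
  unfold circMean periodicSolution
  rw [integral_add (.sub (Continuous.intervalIntegrable (by fun_prop) _ _) hG)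
    intervalIntegrable_const, integral_sub (Continuous.intervalIntegrable (by fun_prop) _ _) hG,
    integral_quadratic_mul_add_linear_mul, integral_const]
  simp [primitive]

lemma contDiff_periodicSolution {m : ℕ} (hf : ContDiff ℝ m f) :
    ContDiff ℝ (m + 2 : ℕ) (periodicSolution f) := by
  have hG := contDiff_primitive (contDiff_primitive hf)
  unfold periodicSolution
  fun_prop

end PeriodicSolution

lemma eq_zero_of_periodic_of_iteratedDeriv_two_eq_circMean {d : ℝ → ℝ} (hper : Periodic d 1)
    (hd : ContDiff ℝ 2 d) (hA : ∀ x, iteratedDeriv 2 d x = circMean d) : d = 0 := by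
  have hd1 : Differentiable ℝ d := hd.differentiable (by norm_num)
  have hd2 : Differentiable ℝ (deriv d) := by
    rw [← iteratedDeriv_one]
    exact hd.differentiable_iteratedDeriv 1 (by norm_num)
  have hdd : ∀ x, deriv (deriv d) x = circMean d := fun x => by
    rw [← hA x, iteratedDeriv_succ, iteratedDeriv_one]
  have hmean : circMean d = 0 := hper.deriv.eq_zero_of_hasDerivAt_const one_ne_zero
    fun x => hdd x ▸ (hd2 x).hasDerivAt
  have hslope : ∀ x, deriv d x = deriv d 0 := fun x =>
    is_const_of_deriv_eq_zero hd2 (fun y => (hdd y).trans hmean) x 0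
  have hslope0 : deriv d 0 = 0 := hper.eq_zero_of_hasDerivAt_const one_ne_zero
    fun x => hslope x ▸ (hd1 x).hasDerivAt
  have hconst : ∀ x, d x = d 0 := fun x =>
    is_const_of_deriv_eq_zero hd1 (fun y => (hslope y).trans hslope0) x 0
  have hd0 : d 0 = 0 := by
    rw [← hmean, circMean, funext hconst, integral_const]
    simp
  funext x
  rw [hconst x, hd0, Pi.zero_apply]

lemma eq_of_circMean_sub_iteratedDeriv_two_eq {v w : ℝ → ℝ} (hv : Periodic v 1)
    (hw : Periodic w 1) (hv2 : ContDiff ℝ 2 v) (hw2 : ContDiff ℝ 2 w)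
    (h : ∀ x, circMean v - iteratedDeriv 2 v x = circMean w - iteratedDeriv 2 w x) : v = w := by
  have hmean : circMean (v - w) = circMean v - circMean w :=
    integral_sub (hv2.continuous.intervalIntegrable _ _) (hw2.continuous.intervalIntegrable _ _)
  refine sub_eq_zero.1 (eq_zero_of_periodic_of_iteratedDeriv_two_eq_circMean (hv.sub hw)
    (hv2.sub hw2) fun x => ?_)
  rw [iteratedDeriv_sub hv2.contDiffAt hw2.contDiffAt, hmean]
  linarith [h x]

/-- for `n ≥ 2` and a `1`-periodic `f` of class `Cⁿ⁻²`, there is a unique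
`1`-periodic `u` of class `Cⁿ` with `μ(u) − u'' = f`, and on `[0,1]` this `u` is given
by the explicit integral formula. -/
theorem opA_bijective_with_explicit_inverse (n : ℕ) (hn : 2 ≤ n) (f : ℝ → ℝ)
    (hfper : Function.Periodic f 1) (hfreg : ContDiff ℝ (n - 2 : ℕ) f) :
    ∃ u : ℝ → ℝ,
      (Function.Periodic u 1 ∧ ContDiff ℝ n u ∧
        ∀ x : ℝ, circMean u - iteratedDeriv 2 u x = f x) ∧
      (∀ x ∈ Set.Icc (0:ℝ) 1,
        u x = (x ^ 2 / 2 - x / 2 + 13 / 12) * (∫ a in (0:ℝ)..1, f a)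
            + (x - 1 / 2) * (∫ a in (0:ℝ)..1, ∫ b in (0:ℝ)..a, f b)
            - (∫ a in (0:ℝ)..x, ∫ b in (0:ℝ)..a, f b)
            + ∫ a in (0:ℝ)..1, ∫ b in (0:ℝ)..a, ∫ c in (0:ℝ)..b, f c) ∧
      ∀ v : ℝ → ℝ,
        (Function.Periodic v 1 ∧ ContDiff ℝ n v ∧
          ∀ x : ℝ, circMean v - iteratedDeriv 2 v x = f x) → v = u := by
  have hf : Continuous f := hfreg.continuous
  have hper : Periodic (periodicSolution f) 1 := periodic_periodicSolution hf hfper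
  have hreg : ContDiff ℝ n (periodicSolution f) := by
    simpa [Nat.sub_add_cancel hn] using contDiff_periodicSolution hfreg
  have hA : ∀ x, circMean (periodicSolution f) - iteratedDeriv 2 (periodicSolution f) x = f x :=
    fun x => by rw [circMean_periodicSolution hf, iteratedDeriv_two_periodicSolution hf]; ring
  have h2n : (2 : WithTop ℕ∞) ≤ n := by exact_mod_cast hn
  refine ⟨periodicSolution f, ⟨hper, hreg, hA⟩, fun x _ => rfl, ?_⟩
  rintro v ⟨hvper, hvreg, hvA⟩
  exact eq_of_circMean_sub_iteratedDeriv_two_eq hvper hper (hvreg.of_le h2n) (hreg.of_le h2n)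
    fun x => by rw [hvA, hA]
end

section
/- Let u, w : ℝ → ℝ be 1-periodic of class C³, let ε₀ > 0, let J be an open interval containing 0, and let Φ : (−ε₀,ε₀) × J × ℝ → ℝ be smooth with, for each ε: Φ(ε,t,x+1) = Φ(ε,t,x) + 1, Φ_x(ε,t,x) > 0, Φ(ε,0,x) = x, and Φ_{xx}(ε,t,x) = Φ_x(ε,t,x) · ( μ(u+εw) ∫₀ᵗ Φ_x(ε,s,x) ds − m₀^ε(x) ∫₀ᵗ Φ_x(ε,s,x)⁻² ds ), where m₀^ε := μ(u+εw) − (u+εw)''. Set φ := Φ(0,·,·), ψ := ∂_ε Φ |_{ε=0}, and m₀ := μ(u) − u''. Then for all t ∈ J, x ∈ ℝ: ψ_{xx}(t,x) = ψ_x(t,x) ( μ(u) ∫₀ᵗ φ_x(s,x) ds − m₀(x) ∫₀ᵗ φ_x(s,x)⁻² ds ) + φ_x(t,x) ( μ(w) ∫₀ᵗ φ_x(s,x) ds + μ(u) ∫₀ᵗ ψ_x(s,x) ds ) − φ_x(t,x) ( (Aw)(x) ∫₀ᵗ φ_x(s,x)⁻² ds − 2 m₀(x) ∫₀ᵗ ψ_x(s,x)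 φ_x(s,x)⁻³ ds ). -/
open Set Filter Topology Function

section

variable {E F : Type*} [NormedAddCommGroup E] [NormedSpace ℝ E]
  [NormedAddCommGroup F] [NormedSpace ℝ F]

theorem ContDiffOn.fderiv_apply_of_isOpen {f : E → F} {U : Set E}
    (hf : ContDiffOn ℝ (⊤ : ℕ∞) f U) (hU : IsOpen U) (v : E) :
    ContDiffOn ℝ (⊤ : ℕ∞) (fun p => fderiv ℝ f p v) U :=
  (ContinuousLinearMap.apply ℝ F v).contDiff.comp_contDiffOn
    (hf.fderiv_of_isOpen hU le_rfl)

theorem fderiv_fderiv_apply_comm {f : E → F} {p : E} (hf : ContDiffAt ℝ 2 f p) (v w : E) :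
    fderiv ℝ (fun q => fderiv ℝ f q v) p w = fderiv ℝ (fun q => fderiv ℝ f q w) p v := by
  have hd : DifferentiableAt ℝ (fderiv ℝ f) p :=
    (hf.fderiv_right (m := 1) le_rfl).differentiableAt one_ne_zero
  rw [fderiv_clm_apply hd (differentiableAt_const v), fderiv_clm_apply hd (differentiableAt_const w)]
  simpa using (hf.isSymmSndFDerivAt (by simp)).eq w v

theorem hasDerivAt_intervalIntegral_of_continuousOn [CompleteSpace F] {G G' : ℝ → ℝ → F}
    {K : Set ℝ} {e₀ a b : ℝ} (hK : K ∈ 𝓝 e₀) (hKc : IsCompact K)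
    (hG : ContinuousOn (uncurry G) (K ×ˢ uIcc a b))
    (hG' : ContinuousOn (uncurry G') (K ×ˢ uIcc a b))
    (hGG' : ∀ e ∈ K, ∀ s ∈ uIcc a b, HasDerivAt (G · s) (G' e s) e) :
    HasDerivAt (fun e => ∫ s in a..b, G e s) (∫ s in a..b, G' e₀ s) e₀ := by
  obtain ⟨C, hC⟩ := (hKc.prod isCompact_uIcc).exists_bound_of_continuousOn hG'
  have he₀ : e₀ ∈ K := mem_of_mem_nhds hK
  have hsub : uIoc a b ⊆ uIcc a b := uIoc_subset_uIcc
  refine (intervalIntegral.hasDerivAt_integral_of_dominated_loc_of_deriv_le (bound := fun _ => C)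
    hK ?_ ((hG.uncurry_left e₀ he₀).intervalIntegrable)
    (((hG'.uncurry_left e₀ he₀).mono hsub).aestronglyMeasurable measurableSet_uIoc) ?_
    intervalIntegrable_const ?_).2
  · filter_upwards [hK] with e he
    exact ((hG.uncurry_left e he).mono hsub).aestronglyMeasurable measurableSet_uIoc
  · exact .of_forall fun s hs e he => hC (e, s) ⟨he, hsub hs⟩
  · exact .of_forall fun s hs e he => hGG' e he s (hsub hs)

end

def uncurry₃ (Φ : ℝ → ℝ → ℝ → ℝ) (p : ℝ × ℝ × ℝ) : ℝ := Φ p.1 p.2.1 p.2.2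

section PartialDerivatives

variable {Φ : ℝ → ℝ → ℝ → ℝ} {U : Set (ℝ × ℝ × ℝ)} {e s y : ℝ}

theorem hasDerivAt_fst_of_differentiableAt (h : DifferentiableAt ℝ (uncurry₃ Φ) (e, s, y)) :
    HasDerivAt (fun e' => Φ e' s y) (fderiv ℝ (uncurry₃ Φ) (e, s, y) (1, 0, 0)) e :=
  h.hasFDerivAt.comp_hasDerivAt (f := fun e' => (e', s, y)) e
    ((hasDerivAt_id e).prodMk ((hasDerivAt_const e s).prodMk (hasDerivAt_const e y)))

theorem hasDerivAt_thd_of_differentiableAt (h : DifferentiableAt ℝ (uncurry₃ Φ) (e, s, y)) :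
    HasDerivAt (Φ e s) (fderiv ℝ (uncurry₃ Φ) (e, s, y) (0, 0, 1)) y :=
  h.hasFDerivAt.comp_hasDerivAt (f := fun y' => (e, s, y')) y
    ((hasDerivAt_const y e).prodMk ((hasDerivAt_const y s).prodMk (hasDerivAt_id y)))

theorem ContinuousOn.uncurry₃_slice_thd {K : Set (ℝ × ℝ)}
    (hΦ : ContinuousOn (uncurry₃ Φ) U) (hK : ∀ q ∈ K, (q.1, q.2, y) ∈ U) :
    ContinuousOn (uncurry fun e s => Φ e s y) K :=
  hΦ.comp (by fun_prop : Continuous fun q : ℝ × ℝ => (q.1, q.2, y)).continuousOn hK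

theorem ContDiffOn.differentiableAt_uncurry₃ (hΦ : ContDiffOn ℝ (⊤ : ℕ∞) (uncurry₃ Φ) U)
    (hU : IsOpen U) (hp : (e, s, y) ∈ U) : DifferentiableAt ℝ (uncurry₃ Φ) (e, s, y) :=
  (hΦ.differentiableOn (by simp)).differentiableAt (hU.mem_nhds hp)

theorem uncurry₃_deriv_fst_eqOn (hΦ : ContDiffOn ℝ (⊤ : ℕ∞) (uncurry₃ Φ) U) (hU : IsOpen U) :
    EqOn (uncurry₃ fun e s y => deriv (fun e' => Φ e' s y) e)
      (fun p => fderiv ℝ (uncurry₃ Φ) p (1, 0, 0)) U :=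
  fun _ hp => (hasDerivAt_fst_of_differentiableAt (hΦ.differentiableAt_uncurry₃ hU hp)).deriv

theorem uncurry₃_deriv_thd_eqOn (hΦ : ContDiffOn ℝ (⊤ : ℕ∞) (uncurry₃ Φ) U) (hU : IsOpen U) :
    EqOn (uncurry₃ fun e s y => deriv (Φ e s) y)
      (fun p => fderiv ℝ (uncurry₃ Φ) p (0, 0, 1)) U :=
  fun _ hp => (hasDerivAt_thd_of_differentiableAt (hΦ.differentiableAt_uncurry₃ hU hp)).deriv

theorem ContDiffOn.uncurry₃_deriv_fst (hΦ : ContDiffOn ℝ (⊤ : ℕ∞) (uncurry₃ Φ) U)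
    (hU : IsOpen U) : ContDiffOn ℝ (⊤ : ℕ∞) (uncurry₃ fun e s y => deriv (fun e' => Φ e' s y) e) U :=
  (hΦ.fderiv_apply_of_isOpen hU _).congr (uncurry₃_deriv_fst_eqOn hΦ hU)

theorem ContDiffOn.uncurry₃_deriv_thd (hΦ : ContDiffOn ℝ (⊤ : ℕ∞) (uncurry₃ Φ) U)
    (hU : IsOpen U) : ContDiffOn ℝ (⊤ : ℕ∞) (uncurry₃ fun e s y => deriv (Φ e s) y) U :=
  (hΦ.fderiv_apply_of_isOpen hU _).congr (uncurry₃_deriv_thd_eqOn hΦ hU)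

theorem deriv_fst_deriv_thd_comm (hΦ : ContDiffOn ℝ (⊤ : ℕ∞) (uncurry₃ Φ) U) (hU : IsOpen U)
    (hp : (e, s, y) ∈ U) :
    deriv (fun e' => deriv (Φ e' s) y) e = deriv (fun y' => deriv (fun e' => Φ e' s y') e) y := by
  have hpU := hU.mem_nhds hp
  rw [(hasDerivAt_fst_of_differentiableAt
      ((hΦ.uncurry₃_deriv_thd hU).differentiableAt_uncurry₃ hU hp)).deriv,
    (hasDerivAt_thd_of_differentiableAt
      ((hΦ.uncurry₃_deriv_fst hU).differentiableAt_uncurry₃ hU hp)).deriv,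
    ((uncurry₃_deriv_thd_eqOn hΦ hU).eventuallyEq_of_mem hpU).fderiv_eq,
    ((uncurry₃_deriv_fst_eqOn hΦ hU).eventuallyEq_of_mem hpU).fderiv_eq]
  exact fderiv_fderiv_apply_comm ((hΦ.contDiffAt hpU).of_le (by norm_cast)) _ _

theorem hasDerivAt_fst_deriv_thd (hΦ : ContDiffOn ℝ (⊤ : ℕ∞) (uncurry₃ Φ) U) (hU : IsOpen U)
    (hp : (e, s, y) ∈ U) :
    HasDerivAt (fun e' => deriv (Φ e' s) y) (deriv (fun y' => deriv (fun e' => Φ e' s y') e) y) e :=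
  deriv_fst_deriv_thd_comm hΦ hU hp ▸ (hasDerivAt_fst_of_differentiableAt
    ((hΦ.uncurry₃_deriv_thd hU).differentiableAt_uncurry₃ hU hp)).differentiableAt.hasDerivAt

theorem hasDerivAt_fst_iteratedDeriv_two_thd (hΦ : ContDiffOn ℝ (⊤ : ℕ∞) (uncurry₃ Φ) U)
    (hU : IsOpen U) (hp : (e, s, y) ∈ U) :
    HasDerivAt (fun e' => iteratedDeriv 2 (Φ e' s) y)
      (iteratedDeriv 2 (fun y' => deriv (fun e' => Φ e' s y') e) y) e := by
  have hcomm : (fun y' => deriv (fun e' => deriv (Φ e' s) y') e)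
      =ᶠ[𝓝 y] deriv (fun y' => deriv (fun e' => Φ e' s y') e) := by
    filter_upwards [(hU.preimage (by fun_prop : Continuous fun y' : ℝ => (e, s, y'))).mem_nhds hp]
      with y' hy' using deriv_fst_deriv_thd_comm hΦ hU hy'
  simp only [iteratedDeriv_succ, iteratedDeriv_zero]
  rw [← hcomm.deriv_eq]
  exact hasDerivAt_fst_deriv_thd (hΦ.uncurry₃_deriv_thd hU) hU hp

end PartialDerivatives

theorem circMean_add_mul {u w : ℝ → ℝ} (hu : IntervalIntegrable u MeasureTheory.volume 0 1)
    (hw : IntervalIntegrable w MeasureTheory.volume 0 1) (c : ℝ) :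
    circMean (fun y => u y + c * w y) = circMean u + c * circMean w := by
  rw [circMean, intervalIntegral.integral_add hu (hw.const_mul c),
    intervalIntegral.integral_const_mul]
  rfl

theorem iteratedDeriv_add_mul {n : ℕ} {u w : ℝ → ℝ} {x : ℝ} (hu : ContDiffAt ℝ n u x)
    (hw : ContDiffAt ℝ n w x) (c : ℝ) :
    iteratedDeriv n (fun y => u y + c * w y) x = iteratedDeriv n u x + c * iteratedDeriv n w x := by
  rw [iteratedDeriv_fun_add hu (contDiffAt_const.mul hw), iteratedDeriv_const_mul_field]

section FlowRightHandSide

variable {P Q : ℝ → ℝ → ℝ} {K : Set ℝ}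

theorem hasDerivAt_integral_inv_sq {e₀ a b : ℝ} (hK : K ∈ 𝓝 e₀) (hKc : IsCompact K)
    (hP : ContinuousOn (uncurry P) (K ×ˢ uIcc a b)) (hQ : ContinuousOn (uncurry Q) (K ×ˢ uIcc a b))
    (hPQ : ∀ e ∈ K, ∀ s ∈ uIcc a b, HasDerivAt (P · s) (Q e s) e)
    (hP0 : ∀ e ∈ K, ∀ s ∈ uIcc a b, P e s ≠ 0) :
    HasDerivAt (fun e => ∫ s in a..b, (P e s ^ 2)⁻¹)
      (-2 * ∫ s in a..b, Q e₀ s * (P e₀ s ^ 3)⁻¹) e₀ := by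
  have hP0' : ∀ q ∈ K ×ˢ uIcc a b, uncurry P q ≠ 0 := fun q hq => hP0 q.1 hq.1 q.2 hq.2
  rw [← intervalIntegral.integral_const_mul]
  refine hasDerivAt_intervalIntegral_of_continuousOn (G := fun e s => (P e s ^ 2)⁻¹)
    (G' := fun e s => -2 * (Q e s * (P e s ^ 3)⁻¹)) hK hKc
    ((hP.pow 2).inv₀ fun q hq => pow_ne_zero 2 (hP0' q hq))
    (continuousOn_const.mul (hQ.mul ((hP.pow 3).inv₀ fun q hq => pow_ne_zero 3 (hP0' q hq))))
    fun e he s hs => ?_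
  refine (((hPQ e he s hs).fun_pow 2).fun_inv (pow_ne_zero 2 (hP0 e he s hs))).congr_deriv ?_
  field_simp [hP0 e he s hs]
  ring

/-- Applied with `P e s = Φ_x(e, s, x)` and `Q e s = ∂_ε Φ_x(e, s, x)`, this is the
`ε`-derivative at `0` of the right-hand side of the flow identity. -/
theorem hasDerivAt_flow_rhs {t M M' V V' : ℝ} (hK : K ∈ 𝓝 0) (hKc : IsCompact K)
    (hP : ContinuousOn (uncurry P) (K ×ˢ uIcc 0 t)) (hQ : ContinuousOn (uncurry Q) (K ×ˢ uIcc 0 t))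
    (hPQ : ∀ e ∈ K, ∀ s ∈ uIcc 0 t, HasDerivAt (P · s) (Q e s) e)
    (hP0 : ∀ e ∈ K, ∀ s ∈ uIcc 0 t, P e s ≠ 0) :
    HasDerivAt
      (fun e => P e t * ((M + e * M') * (∫ s in (0:ℝ)..t, P e s)
        - ((M + e * M') - (V + e * V')) * ∫ s in (0:ℝ)..t, (P e s ^ 2)⁻¹))
      (Q 0 t * (M * (∫ s in (0:ℝ)..t, P 0 s) - (M - V) * ∫ s in (0:ℝ)..t, (P 0 s ^ 2)⁻¹)
        + P 0 t * (M' * (∫ s in (0:ℝ)..t, P 0 s) + M * ∫ s in (0:ℝ)..t, Q 0 s)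
        - P 0 t * ((M' - V') * (∫ s in (0:ℝ)..t, (P 0 s ^ 2)⁻¹)
          - 2 * (M - V) * ∫ s in (0:ℝ)..t, Q 0 s * (P 0 s ^ 3)⁻¹)) 0 := by
  have hM : HasDerivAt (fun e : ℝ => M + e * M') M' 0 := (hasDerivAt_mul_const M').const_add M
  have hV : HasDerivAt (fun e : ℝ => V + e * V') V' 0 := (hasDerivAt_mul_const V').const_add V
  refine ((hPQ 0 (mem_of_mem_nhds hK) t right_mem_uIcc).fun_mul
    ((hM.fun_mul (hasDerivAt_intervalIntegral_of_continuousOn hK hKc hP hQ hPQ)).fun_sub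
      ((hM.fun_sub hV).fun_mul (hasDerivAt_integral_inv_sq hK hKc hP hQ hPQ hP0)))).congr_deriv ?_
  ring

end FlowRightHandSide

theorem perturbed_flow_second_derivative_formula_general
    (u w : ℝ → ℝ)
    (hu : ContDiff ℝ 3 u) (hw : ContDiff ℝ 3 w)
    (ε₀ : ℝ) (hε₀ : 0 < ε₀) (a b : ℝ) (ha : a < 0) (hb : 0 < b)
    (Φ : ℝ → ℝ → ℝ → ℝ)
    (hΦ : ContDiffOn ℝ (⊤ : ℕ∞) (fun p : ℝ × ℝ × ℝ => Φ p.1 p.2.1 p.2.2)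
      (Set.Ioo (-ε₀) ε₀ ×ˢ Set.Ioo a b ×ˢ Set.univ))
    (hpos : ∀ ε ∈ Set.Ioo (-ε₀) ε₀, ∀ t ∈ Set.Ioo a b, ∀ x : ℝ,
      0 < deriv (Φ ε t) x)
    (hODE : ∀ ε ∈ Set.Ioo (-ε₀) ε₀, ∀ t ∈ Set.Ioo a b, ∀ x : ℝ,
      iteratedDeriv 2 (Φ ε t) x
        = deriv (Φ ε t) x *
            (circMean (fun y => u y + ε * w y)
                * (∫ s in (0:ℝ)..t, deriv (Φ ε s) x)
              - (circMean (fun y => u y + ε * w y)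
                  - iteratedDeriv 2 (fun y => u y + ε * w y) x)
                * ∫ s in (0:ℝ)..t, ((deriv (Φ ε s) x) ^ 2)⁻¹)) :
    ∀ t ∈ Set.Ioo a b, ∀ x : ℝ,
      iteratedDeriv 2 (fun y => deriv (fun ε => Φ ε t y) 0) x
        = deriv (fun y => deriv (fun ε => Φ ε t y) 0) x *
            (circMean u * (∫ s in (0:ℝ)..t, deriv (Φ 0 s) x)
              - (circMean u - iteratedDeriv 2 u x)
                  * ∫ s in (0:ℝ)..t, ((deriv (Φ 0 s) x) ^ 2)⁻¹)
          + deriv (Φ 0 t) x *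
              (circMean w * (∫ s in (0:ℝ)..t, deriv (Φ 0 s) x)
                + circMean u
                    * ∫ s in (0:ℝ)..t, deriv (fun y => deriv (fun ε => Φ ε s y) 0) x)
          - deriv (Φ 0 t) x *
              ((circMean w - iteratedDeriv 2 w x)
                  * (∫ s in (0:ℝ)..t, ((deriv (Φ 0 s) x) ^ 2)⁻¹)
                - 2 * (circMean u - iteratedDeriv 2 u x)
                    * ∫ s in (0:ℝ)..t,
                        deriv (fun y => deriv (fun ε => Φ ε s y) 0) x
                          * ((deriv (Φ 0 s) x) ^ 3)⁻¹) := by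
  intro t ht x
  set U := Ioo (-ε₀) ε₀ ×ˢ Ioo a b ×ˢ (univ : Set ℝ)
  have hU : IsOpen U := isOpen_Ioo.prod (isOpen_Ioo.prod isOpen_univ)
  have hΦU : ContDiffOn ℝ (⊤ : ℕ∞) (uncurry₃ Φ) U := hΦ
  have hε₀' : (0 : ℝ) ∈ Ioo (-ε₀) ε₀ := ⟨neg_neg_of_pos hε₀, hε₀⟩
  have hK : Icc (-(ε₀ / 2)) (ε₀ / 2) ∈ 𝓝 (0 : ℝ) := Icc_mem_nhds (by linarith) (by linarith)
  have hKU : ∀ q ∈ Icc (-(ε₀ / 2)) (ε₀ / 2) ×ˢ uIcc 0 t, (q.1, q.2, x) ∈ U := fun q hq =>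
    ⟨⟨by linarith [hq.1.1], by linarith [hq.1.2]⟩,
      ordConnected_Ioo.uIcc_subset ⟨ha, hb⟩ ht hq.2, mem_univ x⟩
  have hRHS := hasDerivAt_flow_rhs (M := circMean u) (M' := circMean w)
    (V := iteratedDeriv 2 u x) (V' := iteratedDeriv 2 w x) hK isCompact_Icc
    ((hΦU.uncurry₃_deriv_thd hU).continuousOn.uncurry₃_slice_thd hKU)
    (((hΦU.uncurry₃_deriv_fst hU).uncurry₃_deriv_thd hU).continuousOn.uncurry₃_slice_thd hKU)
    (fun e he s hs => hasDerivAt_fst_deriv_thd hΦU hU (hKU (e, s) ⟨he, hs⟩))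
    (fun e he s hs => (hpos e (hKU (e, s) ⟨he, hs⟩).1 s (hKU (e, s) ⟨he, hs⟩).2.1 x).ne')
  refine (hasDerivAt_fst_iteratedDeriv_two_thd hΦU hU ⟨hε₀', ht, mem_univ x⟩).unique
    (hRHS.congr_of_eventuallyEq ?_)
  filter_upwards [Ioo_mem_nhds hε₀'.1 hε₀'.2] with e he
  rw [hODE e he t ht x, circMean_add_mul (hu.continuous.intervalIntegrable 0 1)
    (hw.continuous.intervalIntegrable 0 1), iteratedDeriv_add_mul (hu.of_le (by norm_num)).contDiffAt
    (hw.of_le (by norm_num)).contDiffAt]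

/-- differentiating the flow identity
`Φ_{xx}(ε,t,x) = Φ_x(ε,t,x)·(μ(u+εw) ∫₀ᵗ Φ_x ds − m₀^ε(x) ∫₀ᵗ Φ_x⁻² ds)`
with respect to `ε` at `ε = 0`; here `φ = Φ(0,·,·)`, `ψ = ∂_ε Φ|_{ε=0}`,
`m₀ = μ(u) − u''` and `Aw = μ(w) − w''`. -/
theorem perturbed_flow_second_derivative_formula
    (u w : ℝ → ℝ) (huper : Function.Periodic u 1) (hwper : Function.Periodic w 1)
    (hu : ContDiff ℝ 3 u) (hw : ContDiff ℝ 3 w)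
    (ε₀ : ℝ) (hε₀ : 0 < ε₀) (a b : ℝ) (ha : a < 0) (hb : 0 < b)
    (Φ : ℝ → ℝ → ℝ → ℝ)
    (hΦ : ContDiffOn ℝ (⊤ : ℕ∞) (fun p : ℝ × ℝ × ℝ => Φ p.1 p.2.1 p.2.2)
      (Set.Ioo (-ε₀) ε₀ ×ˢ Set.Ioo a b ×ˢ Set.univ))
    (hlift : ∀ ε ∈ Set.Ioo (-ε₀) ε₀, ∀ t ∈ Set.Ioo a b, ∀ x : ℝ,
      Φ ε t (x + 1) = Φ ε t x + 1)
    (hpos : ∀ ε ∈ Set.Ioo (-ε₀) ε₀, ∀ t ∈ Set.Ioo a b, ∀ x : ℝ,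
      0 < deriv (Φ ε t) x)
    (hinit : ∀ ε ∈ Set.Ioo (-ε₀) ε₀, ∀ x : ℝ, Φ ε 0 x = x)
    (hODE : ∀ ε ∈ Set.Ioo (-ε₀) ε₀, ∀ t ∈ Set.Ioo a b, ∀ x : ℝ,
      iteratedDeriv 2 (Φ ε t) x
        = deriv (Φ ε t) x *
            (circMean (fun y => u y + ε * w y)
                * (∫ s in (0:ℝ)..t, deriv (Φ ε s) x)
              - (circMean (fun y => u y + ε * w y)
                  - iteratedDeriv 2 (fun y => u y + ε * w y) x)
                * ∫ s in (0:ℝ)..t, ((deriv (Φ ε s) x) ^ 2)⁻¹)) :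
    ∀ t ∈ Set.Ioo a b, ∀ x : ℝ,
      iteratedDeriv 2 (fun y => deriv (fun ε => Φ ε t y) 0) x
        = deriv (fun y => deriv (fun ε => Φ ε t y) 0) x *
            (circMean u * (∫ s in (0:ℝ)..t, deriv (Φ 0 s) x)
              - (circMean u - iteratedDeriv 2 u x)
                  * ∫ s in (0:ℝ)..t, ((deriv (Φ 0 s) x) ^ 2)⁻¹)
          + deriv (Φ 0 t) x *
              (circMean w * (∫ s in (0:ℝ)..t, deriv (Φ 0 s) x)
                + circMean u
                    * ∫ s in (0:ℝ)..t, deriv (fun y => deriv (fun ε => Φ ε s y) 0) x)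
          - deriv (Φ 0 t) x *
              ((circMean w - iteratedDeriv 2 w x)
                  * (∫ s in (0:ℝ)..t, ((deriv (Φ 0 s) x) ^ 2)⁻¹)
                - 2 * (circMean u - iteratedDeriv 2 u x)
                    * ∫ s in (0:ℝ)..t,
                        deriv (fun y => deriv (fun ε => Φ ε s y) 0) x
                          * ((deriv (Φ 0 s) x) ^ 3)⁻¹) :=
  perturbed_flow_second_derivative_formula_general u w hu hw ε₀ hε₀ a b ha hb Φ hΦ hpos hODE
end
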